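/- Let H₁, H₂ ∈ (0,1) and define p(x,t) = 2 ∫₀^∞ g(x; s^{2H₁}) g(s; t^{2H₂}) ds. Then for all x ≠ 0 and t > 0, p satisfies the second-order wave-type equation (1 + H₁H₂) t ∂p/∂t + t² ∂²p/∂t² = H₁²H₂² ( 2x ∂p/∂x + x² ∂²p/∂x² ). -/

import Mathlib

open Real Set

/-- Centered Gaussian density with variance `v`:
`g(x; v) = (2πv)^{-1/2} exp(−x²/(2v))`. -/
noncomputable def gauss (x v : ℝ) : ℝ :=
  (Real.sqrt (2 * Real.pi * v))⁻¹ * Real.exp (-x ^ 2 / (2 * v))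

/-- Density of the iterated fractional Brownian motion `I_F(t) = B¹_{H₁}(|B²_{H₂}(t)|)`:
`p(x,t) = 2 ∫₀^∞ g(x; s^{2H₁}) g(s; t^{2H₂}) ds`. -/
noncomputable def densIF (H₁ H₂ x t : ℝ) : ℝ :=
  2 * ∫ s in Set.Ioi (0 : ℝ), gauss x (s ^ (2 * H₁)) * gauss s (t ^ (2 * H₂))

open MeasureTheory

noncomputable def IF0 (H₁ z u : ℝ) : ℝ := gauss z (u ^ (2 * H₁)) * gauss u 1
noncomputable def IF1 (H₁ z u : ℝ) : ℝ := (-z / u ^ (2 * H₁)) * IF0 H₁ z u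
noncomputable def IF2 (H₁ z u : ℝ) : ℝ :=
  (z ^ 2 / (u ^ (2 * H₁)) ^ 2 - 1 / u ^ (2 * H₁)) * IF0 H₁ z u
noncomputable def phiA (H₁ z : ℝ) : ℝ := 2 * ∫ u in Ioi (0:ℝ), IF1 H₁ z u
noncomputable def phiB (H₁ z : ℝ) : ℝ := 2 * ∫ u in Ioi (0:ℝ), IF2 H₁ z u


lemma gauss_scale {a : ℝ} (ha : 0 < a) {v : ℝ} (hv : v ≠ 0) (y : ℝ) :
    gauss (a * y) (a ^ 2 * v) = a⁻¹ * gauss y v := by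
  unfold gauss
  have h1 : 2 * π * (a ^ 2 * v) = a ^ 2 * (2 * π * v) := by ring
  rw [h1, Real.sqrt_mul (sq_nonneg a), Real.sqrt_sq ha.le]
  have h2 : -(a * y) ^ 2 / (2 * (a ^ 2 * v)) = -y ^ 2 / (2 * v) := by
    field_simp
  rw [h2, mul_inv]
  ring

lemma hasDerivAt_gauss {v : ℝ} (hv : 0 < v) (z : ℝ) :
    HasDerivAt (fun z => gauss z v) (-z / v * gauss z v) z := by
  unfold gauss
  have h1 : HasDerivAt (fun z : ℝ => -z ^ 2 / (2 * v)) (-z / v) z := by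
    have h := ((hasDerivAt_pow 2 z).neg).div_const (2 * v)
    refine h.congr_deriv ?_
    field_simp
    ring
  have h2 := (h1.exp).const_mul (Real.sqrt (2 * π * v))⁻¹
  refine h2.congr_deriv ?_
  ring

lemma exp_le_aux {y : ℝ} (hy : 0 < y) : Real.exp (-y) ≤ 1 / y := by
  rw [Real.exp_neg, one_div]
  exact inv_anti₀ hy (by linarith [Real.add_one_le_exp y])

lemma exp_le_aux2 {y : ℝ} (hy : 0 < y) : Real.exp (-y) ≤ 4 / y ^ 2 := by
  have h : y ^ 2 / 4 ≤ Real.exp y := by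
    have h1 := Real.add_one_le_exp (y / 2)
    have h2 : (y / 2 + 1) ^ 2 ≤ Real.exp (y / 2) ^ 2 :=
      pow_le_pow_left₀ (by linarith) h1 2
    rw [← Real.exp_nat_mul] at h2
    norm_num at h2
    rw [show (2:ℝ) * (y / 2) = y by ring] at h2
    nlinarith [Real.exp_pos y]
  rw [Real.exp_neg]
  have := inv_anti₀ (show (0:ℝ) < y ^ 2 / 4 by positivity) h
  calc (Real.exp y)⁻¹ ≤ (y ^ 2 / 4)⁻¹ := this
    _ = 4 / y ^ 2 := by rw [inv_div]

lemma exp_decay_mono {v c z : ℝ} (hv : 0 < v) (hc : 0 < c) (hz : c ≤ |z|) :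
    Real.exp (-z ^ 2 / (2 * v)) ≤ Real.exp (-(c ^ 2 / (2 * v))) := by
  apply Real.exp_le_exp.2
  rw [neg_div, neg_le_neg_iff]
  apply div_le_div_of_nonneg_right ?_ (by positivity)
  calc c ^ 2 ≤ |z| ^ 2 := by nlinarith [abs_nonneg z]
    _ = z ^ 2 := sq_abs z

lemma exp_decay1 {v c z : ℝ} (hv : 0 < v) (hc : 0 < c) (hz : c ≤ |z|) :
    Real.exp (-z ^ 2 / (2 * v)) ≤ 2 * v / c ^ 2 := by
  calc Real.exp (-z ^ 2 / (2 * v)) ≤ Real.exp (-(c ^ 2 / (2 * v))) := exp_decay_mono hv hc hz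
    _ ≤ 1 / (c ^ 2 / (2 * v)) := exp_le_aux (by positivity)
    _ = 2 * v / c ^ 2 := by rw [one_div_div]

lemma exp_decay2 {v c z : ℝ} (hv : 0 < v) (hc : 0 < c) (hz : c ≤ |z|) :
    Real.exp (-z ^ 2 / (2 * v)) ≤ 16 * v ^ 2 / c ^ 4 := by
  calc Real.exp (-z ^ 2 / (2 * v)) ≤ Real.exp (-(c ^ 2 / (2 * v))) := exp_decay_mono hv hc hz
    _ ≤ 4 / (c ^ 2 / (2 * v)) ^ 2 := exp_le_aux2 (by positivity)
    _ = 16 * v ^ 2 / c ^ 4 := by field_simp; ring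

lemma gauss_nonneg (x v : ℝ) : 0 ≤ gauss x v := by unfold gauss; positivity

lemma sqrt_inv_eq {u H₁ : ℝ} (hu : 0 < u) :
    (Real.sqrt (2 * π * u ^ (2 * H₁)))⁻¹ = (Real.sqrt (2 * π))⁻¹ * u ^ (-H₁) := by
  have h1 : u ^ (2 * H₁) = (u ^ H₁) ^ 2 := by
    rw [← Real.rpow_natCast (u ^ H₁) 2, ← Real.rpow_mul hu.le]
    norm_num
    ring_nf
  rw [h1, Real.sqrt_mul (by positivity), Real.sqrt_sq (Real.rpow_nonneg hu.le H₁), mul_inv,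
    ← Real.rpow_neg hu.le]


-- master bounds
lemma bound0 {H₁ u : ℝ} (hu : 0 < u) (z : ℝ) :
    |gauss z (u ^ (2 * H₁)) * gauss u 1|
      ≤ (Real.sqrt (2 * π))⁻¹ * (u ^ (-H₁) * gauss u 1) := by
  have hv : (0:ℝ) < u ^ (2 * H₁) := Real.rpow_pos_of_pos hu _
  rw [abs_of_nonneg (mul_nonneg (gauss_nonneg _ _) (gauss_nonneg _ _))]
  have hg : gauss z (u ^ (2 * H₁)) ≤ (Real.sqrt (2 * π))⁻¹ * u ^ (-H₁) := by
    unfold gauss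
    rw [sqrt_inv_eq hu]
    nlinarith [Real.exp_le_one_iff.2 (div_nonpos_of_nonpos_of_nonneg (neg_nonpos.2 (sq_nonneg z)) (by positivity : (0:ℝ) ≤ 2*u^(2*H₁))),
      mul_nonneg (inv_nonneg.2 (Real.sqrt_nonneg (2*π))) (Real.rpow_nonneg hu.le (-H₁)),
      Real.exp_pos (-z^2/(2*u^(2*H₁)))]
  calc gauss z (u ^ (2 * H₁)) * gauss u 1
      ≤ ((Real.sqrt (2 * π))⁻¹ * u ^ (-H₁)) * gauss u 1 :=
        mul_le_mul_of_nonneg_right hg (gauss_nonneg _ _)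
    _ = _ := by ring

lemma bound1 {H₁ u c C z : ℝ} (hu : 0 < u) (hc : 0 < c) (hz : c ≤ |z|) (hzC : |z| ≤ C) :
    |(-z / u ^ (2 * H₁)) * (gauss z (u ^ (2 * H₁)) * gauss u 1)|
      ≤ (2 * C / c ^ 2) * ((Real.sqrt (2 * π))⁻¹ * (u ^ (-H₁) * gauss u 1)) := by
  have hv : (0:ℝ) < u ^ (2 * H₁) := Real.rpow_pos_of_pos hu _
  set v := u ^ (2 * H₁) with hvdef
  have habs : |(-z / v) * (gauss z v * gauss u 1)|
      = (|z| / v) * (gauss z v * gauss u 1) := by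
    rw [abs_mul, abs_div, abs_neg, abs_of_pos hv,
      abs_of_nonneg (mul_nonneg (gauss_nonneg _ _) (gauss_nonneg _ _))]
  rw [habs]
  have hg : gauss z v ≤ ((Real.sqrt (2 * π))⁻¹ * u ^ (-H₁)) * (2 * v / c ^ 2) := by
    unfold gauss
    rw [hvdef, sqrt_inv_eq hu]
    exact mul_le_mul_of_nonneg_left (exp_decay1 hv hc hz) (by positivity)
  have hC0 : 0 < C := lt_of_lt_of_le hc (le_trans hz hzC)
  calc (|z| / v) * (gauss z v * gauss u 1)
      ≤ (C / v) * ((((Real.sqrt (2 * π))⁻¹ * u ^ (-H₁)) * (2 * v / c ^ 2)) * gauss u 1) := by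
        apply mul_le_mul (by gcongr) (mul_le_mul_of_nonneg_right hg (gauss_nonneg _ _))
          (mul_nonneg (gauss_nonneg _ _) (gauss_nonneg _ _)) (by positivity)
    _ = (2 * C / c ^ 2) * ((Real.sqrt (2 * π))⁻¹ * (u ^ (-H₁) * gauss u 1)) := by
        field_simp

lemma bound2 {H₁ u c C z : ℝ} (hu : 0 < u) (hc : 0 < c) (hz : c ≤ |z|) (hzC : |z| ≤ C) :
    |(z ^ 2 / (u ^ (2 * H₁)) ^ 2 - 1 / u ^ (2 * H₁)) * (gauss z (u ^ (2 * H₁)) * gauss u 1)|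
      ≤ (16 * C ^ 2 / c ^ 4 + 2 / c ^ 2) *
          ((Real.sqrt (2 * π))⁻¹ * (u ^ (-H₁) * gauss u 1)) := by
  have hv : (0:ℝ) < u ^ (2 * H₁) := Real.rpow_pos_of_pos hu _
  set v := u ^ (2 * H₁) with hvdef
  set s := (Real.sqrt (2 * π))⁻¹ * u ^ (-H₁) with hsdef
  have hs0 : 0 ≤ s := by rw [hsdef]; positivity
  have hgg : gauss z v = s * Real.exp (-z ^ 2 / (2 * v)) := by
    unfold gauss; rw [hvdef, hsdef, sqrt_inv_eq hu]
  have hC0 : 0 < C := lt_of_lt_of_le hc (le_trans hz hzC)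
  have h1 : |z ^ 2 / v ^ 2 - 1 / v| ≤ z ^ 2 / v ^ 2 + 1 / v := by
    calc |z ^ 2 / v ^ 2 - 1 / v| ≤ |z ^ 2 / v ^ 2| + |1 / v| := abs_sub _ _
      _ = z ^ 2 / v ^ 2 + 1 / v := by
          rw [abs_of_nonneg (by positivity), abs_of_nonneg (by positivity)]
  rw [abs_mul, abs_of_nonneg (mul_nonneg (gauss_nonneg _ _) (gauss_nonneg _ _))]
  have he1 := exp_decay1 hv hc hz
  have he2 := exp_decay2 hv hc hz
  have hz2 : z ^ 2 ≤ C ^ 2 := by nlinarith [abs_nonneg z, sq_abs z]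
  have key : |z ^ 2 / v ^ 2 - 1 / v| * gauss z v ≤ (16 * C ^ 2 / c ^ 4 + 2 / c ^ 2) * s := by
    calc |z ^ 2 / v ^ 2 - 1 / v| * gauss z v
        ≤ (z ^ 2 / v ^ 2 + 1 / v) * gauss z v :=
          mul_le_mul_of_nonneg_right h1 (gauss_nonneg _ _)
      _ = (z ^ 2 / v ^ 2) * (s * Real.exp (-z ^ 2 / (2 * v)))
            + (1 / v) * (s * Real.exp (-z ^ 2 / (2 * v))) := by rw [hgg]; ring
      _ ≤ (z ^ 2 / v ^ 2) * (s * (16 * v ^ 2 / c ^ 4)) + (1 / v) * (s * (2 * v / c ^ 2)) := by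
          gcongr
      _ ≤ (C ^ 2 / v ^ 2) * (s * (16 * v ^ 2 / c ^ 4)) + (1 / v) * (s * (2 * v / c ^ 2)) := by
          gcongr
      _ = (16 * C ^ 2 / c ^ 4 + 2 / c ^ 2) * s := by field_simp
  calc |z ^ 2 / v ^ 2 - 1 / v| * (gauss z v * gauss u 1)
      = (|z ^ 2 / v ^ 2 - 1 / v| * gauss z v) * gauss u 1 := by ring
    _ ≤ ((16 * C ^ 2 / c ^ 4 + 2 / c ^ 2) * s) * gauss u 1 :=
        mul_le_mul_of_nonneg_right key (gauss_nonneg _ _)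
    _ = _ := by rw [hsdef]; ring



lemma continuous_gauss_one : Continuous (fun u : ℝ => gauss u 1) := by
  unfold gauss
  apply Continuous.mul continuous_const
  exact Real.continuous_exp.comp ((continuous_pow 2).neg.div_const _)

lemma continuousAt_rpow2 {H₁ u : ℝ} (hu : 0 < u) :
    ContinuousAt (fun u : ℝ => u ^ (2 * H₁)) u :=
  Real.continuousAt_rpow_const u _ (Or.inl hu.ne')

lemma continuousAt_gauss_v {z v : ℝ} (hv : 0 < v) :
    ContinuousAt (fun v => gauss z v) v := by
  unfold gauss
  apply ContinuousAt.mul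
  · apply ContinuousAt.inv₀
    · exact (Real.continuous_sqrt.comp (continuous_const.mul continuous_id)).continuousAt
    · exact (Real.sqrt_pos.2 (by positivity)).ne'
  · apply ContinuousAt.comp Real.continuous_exp.continuousAt
    exact ContinuousAt.div continuousAt_const
      (continuous_const.mul continuous_id).continuousAt (by positivity)

lemma contOn_IF0 (H₁ z : ℝ) : ContinuousOn (IF0 H₁ z) (Ioi 0) := by
  intro u hu
  have hu0 : (0:ℝ) < u := hu
  have hv : (0:ℝ) < u ^ (2 * H₁) := Real.rpow_pos_of_pos hu0 _
  have hcomp : ContinuousAt (fun u : ℝ => gauss z (u ^ (2 * H₁))) u :=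
    ContinuousAt.comp (g := fun v => gauss z v) (continuousAt_gauss_v hv)
      (continuousAt_rpow2 hu0)
  exact (hcomp.mul continuous_gauss_one.continuousAt).continuousWithinAt

lemma contOn_IF1 (H₁ z : ℝ) : ContinuousOn (IF1 H₁ z) (Ioi 0) := by
  intro u hu
  have hu0 : (0:ℝ) < u := hu
  have hv : (0:ℝ) < u ^ (2 * H₁) := Real.rpow_pos_of_pos hu0 _
  refine ContinuousWithinAt.mul ?_ ((contOn_IF0 H₁ z) u hu)
  exact (ContinuousAt.div continuousAt_const (continuousAt_rpow2 hu0) hv.ne').continuousWithinAt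

lemma contOn_IF2 (H₁ z : ℝ) : ContinuousOn (IF2 H₁ z) (Ioi 0) := by
  intro u hu
  have hu0 : (0:ℝ) < u := hu
  have hv : (0:ℝ) < u ^ (2 * H₁) := Real.rpow_pos_of_pos hu0 _
  refine ContinuousWithinAt.mul ?_ ((contOn_IF0 H₁ z) u hu)
  apply ContinuousWithinAt.sub
  · exact (ContinuousAt.div continuousAt_const
      ((continuousAt_rpow2 hu0).pow 2) (pow_ne_zero 2 hv.ne')).continuousWithinAt
  · exact (ContinuousAt.div continuousAt_const (continuousAt_rpow2 hu0) hv.ne').continuousWithinAt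

lemma integrableOn_bound {H₁ : ℝ} (hH₁ : H₁ ∈ Ioo (0:ℝ) 1) (K : ℝ) :
    IntegrableOn (fun u : ℝ => K * ((Real.sqrt (2 * π))⁻¹ * (u ^ (-H₁) * gauss u 1)))
      (Ioi 0) := by
  have hfun : (fun u : ℝ => K * ((Real.sqrt (2 * π))⁻¹ * (u ^ (-H₁) * gauss u 1)))
      = fun u : ℝ => (K * (Real.sqrt (2 * π))⁻¹ * (Real.sqrt (2 * π * 1))⁻¹) *
          (u ^ (-H₁) * Real.exp (-(1/2 : ℝ) * u ^ 2)) := by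
    funext u
    unfold gauss
    rw [show (-u ^ 2 / (2 * 1) : ℝ) = -(1/2 : ℝ) * u ^ 2 by ring]
    ring
  rw [hfun]
  have h := integrableOn_rpow_mul_exp_neg_mul_sq (b := (1/2 : ℝ)) (by norm_num)
    (s := -H₁) (by linarith [hH₁.2])
  exact h.const_mul _

lemma hasDerivAt_IF0 {H₁ u : ℝ} (hu : 0 < u) (z : ℝ) :
    HasDerivAt (fun z => IF0 H₁ z u) (IF1 H₁ z u) z := by
  have hv : (0:ℝ) < u ^ (2 * H₁) := Real.rpow_pos_of_pos hu _
  have h := (hasDerivAt_gauss hv z).mul_const (gauss u 1)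
  refine h.congr_deriv ?_
  unfold IF1 IF0
  ring

lemma hasDerivAt_IF1 {H₁ u : ℝ} (hu : 0 < u) (z : ℝ) :
    HasDerivAt (fun z => IF1 H₁ z u) (IF2 H₁ z u) z := by
  have hv : (0:ℝ) < u ^ (2 * H₁) := Real.rpow_pos_of_pos hu _
  have h1 : HasDerivAt (fun z : ℝ => -z / u ^ (2 * H₁)) (-1 / u ^ (2 * H₁)) z := by
    simpa using (hasDerivAt_id z).neg.div_const (u ^ (2 * H₁))
  have h2 := (hasDerivAt_gauss hv z).mul_const (gauss u 1)
  have h := h1.mul h2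
  refine h.congr_deriv ?_
  unfold IF2 IF0
  field_simp
  ring

lemma ball_abs {z : ℝ} (hz : z ≠ 0) : ∀ z' ∈ Metric.ball z (|z| / 2),
    |z| / 2 ≤ |z'| ∧ |z'| ≤ 2 * |z| := by
  intro z' hz'
  rw [Metric.mem_ball, Real.dist_eq] at hz'
  have h1 := abs_sub_abs_le_abs_sub z z'
  have h2 := abs_sub_abs_le_abs_sub z' z
  rw [abs_sub_comm] at h1
  constructor <;> linarith

lemma hasDerivAt_int_IF0 {H₁ : ℝ} (hH₁ : H₁ ∈ Ioo (0:ℝ) 1) {z : ℝ} (hz : z ≠ 0) :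
    HasDerivAt (fun z => ∫ u in Ioi (0:ℝ), IF0 H₁ z u) (∫ u in Ioi (0:ℝ), IF1 H₁ z u) z := by
  have hz0 : 0 < |z| := abs_pos.2 hz
  have key := hasDerivAt_integral_of_dominated_loc_of_deriv_le
    (F := fun z u => IF0 H₁ z u) (F' := fun z u => IF1 H₁ z u)
    (bound := fun u => (2 * (2 * |z|) / (|z| / 2) ^ 2) *
      ((Real.sqrt (2 * π))⁻¹ * (u ^ (-H₁) * gauss u 1)))
    (μ := volume.restrict (Ioi 0)) (x₀ := z) (s := Metric.ball z (|z| / 2)) (Metric.ball_mem_nhds z (by positivity))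
    ?_ ?_ ?_ ?_ ?_ ?_
  · exact key.2
  · exact Filter.Eventually.of_forall fun z' =>
      (contOn_IF0 H₁ z').aestronglyMeasurable measurableSet_Ioi
  · apply Integrable.mono'
      (g := fun u => (Real.sqrt (2 * π))⁻¹ * (u ^ (-H₁) * gauss u 1)) ?_
      ((contOn_IF0 H₁ z).aestronglyMeasurable measurableSet_Ioi) ?_
    · simpa [IntegrableOn] using integrableOn_bound hH₁ 1
    · filter_upwards [self_mem_ae_restrict measurableSet_Ioi] with u hu
      simp only [IF0, Real.norm_eq_abs]
      exact bound0 (H₁ := H₁) hu z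
  · exact (contOn_IF1 H₁ z).aestronglyMeasurable measurableSet_Ioi
  · filter_upwards [self_mem_ae_restrict measurableSet_Ioi] with u hu z' hz'
    obtain ⟨h1, h2⟩ := ball_abs hz z' hz'
    simp only [IF1, IF0, Real.norm_eq_abs]
    exact bound1 (H₁ := H₁) hu (by positivity) h1 h2
  · exact integrableOn_bound hH₁ _
  · filter_upwards [self_mem_ae_restrict measurableSet_Ioi] with u hu z' _
    exact hasDerivAt_IF0 hu z'

lemma hasDerivAt_int_IF1 {H₁ : ℝ} (hH₁ : H₁ ∈ Ioo (0:ℝ) 1) {z : ℝ} (hz : z ≠ 0) :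
    HasDerivAt (fun z => ∫ u in Ioi (0:ℝ), IF1 H₁ z u) (∫ u in Ioi (0:ℝ), IF2 H₁ z u) z := by
  have hz0 : 0 < |z| := abs_pos.2 hz
  have key := hasDerivAt_integral_of_dominated_loc_of_deriv_le
    (F := fun z u => IF1 H₁ z u) (F' := fun z u => IF2 H₁ z u)
    (bound := fun u => (16 * (2 * |z|) ^ 2 / (|z| / 2) ^ 4 + 2 / (|z| / 2) ^ 2) *
      ((Real.sqrt (2 * π))⁻¹ * (u ^ (-H₁) * gauss u 1)))
    (μ := volume.restrict (Ioi 0)) (x₀ := z) (s := Metric.ball z (|z| / 2)) (Metric.ball_mem_nhds z (by positivity))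
    ?_ ?_ ?_ ?_ ?_ ?_
  · exact key.2
  · exact Filter.Eventually.of_forall fun z' =>
      (contOn_IF1 H₁ z').aestronglyMeasurable measurableSet_Ioi
  · apply Integrable.mono'
      (g := fun u => (2 * (2 * |z|) / (|z| / 2) ^ 2) *
        ((Real.sqrt (2 * π))⁻¹ * (u ^ (-H₁) * gauss u 1))) (integrableOn_bound hH₁ _)
      ((contOn_IF1 H₁ z).aestronglyMeasurable measurableSet_Ioi) ?_
    filter_upwards [self_mem_ae_restrict measurableSet_Ioi] with u hu
    simp only [IF1, IF0, Real.norm_eq_abs]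
    exact bound1 (H₁ := H₁) hu (by positivity) (by linarith : |z| / 2 ≤ |z|)
      (by linarith : |z| ≤ 2 * |z|)
  · exact (contOn_IF2 H₁ z).aestronglyMeasurable measurableSet_Ioi
  · filter_upwards [self_mem_ae_restrict measurableSet_Ioi] with u hu z' hz'
    obtain ⟨h1, h2⟩ := ball_abs hz z' hz'
    simp only [IF2, IF1, IF0, Real.norm_eq_abs]
    exact bound2 (H₁ := H₁) hu (by positivity) h1 h2
  · exact integrableOn_bound hH₁ _
  · filter_upwards [self_mem_ae_restrict measurableSet_Ioi] with u hu z' _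
    exact hasDerivAt_IF1 hu z'

lemma densIF_one (H₁ H₂ z : ℝ) : densIF H₁ H₂ z 1 = 2 * ∫ u in Ioi (0:ℝ), IF0 H₁ z u := by
  unfold densIF IF0
  rw [Real.one_rpow]

lemma densIF_scale {H₁ H₂ : ℝ} (x : ℝ) {t : ℝ} (ht : 0 < t) :
    densIF H₁ H₂ x t
      = t ^ (-(H₁ * H₂)) * densIF H₁ H₂ (x * t ^ (-(H₁ * H₂))) 1 := by
  set c : ℝ := t ^ H₂ with hcdef
  set b : ℝ := t ^ (H₁ * H₂) with hbdef
  have hc : 0 < c := Real.rpow_pos_of_pos ht _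
  have hb : 0 < b := Real.rpow_pos_of_pos ht _
  have hbinv : t ^ (-(H₁ * H₂)) = b⁻¹ := by rw [hbdef, ← Real.rpow_neg ht.le]
  have hchange := integral_comp_mul_left_Ioi
    (fun s => gauss x (s ^ (2 * H₁)) * gauss s (t ^ (2 * H₂))) 0 hc
  rw [mul_zero] at hchange
  have hpt : ∀ u ∈ Ioi (0:ℝ),
      gauss x ((c * u) ^ (2 * H₁)) * gauss (c * u) (t ^ (2 * H₂))
        = (b⁻¹ * c⁻¹) * IF0 H₁ (x * b⁻¹) u := by
    intro u hu
    have hu0 : (0:ℝ) < u := hu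
    have h1 : (c * u) ^ (2 * H₁) = b ^ 2 * u ^ (2 * H₁) := by
      rw [Real.mul_rpow hc.le hu0.le, hcdef, hbdef, ← Real.rpow_natCast (t ^ (H₁ * H₂)) 2,
        ← Real.rpow_mul ht.le, ← Real.rpow_mul ht.le]
      norm_num
      ring_nf
      simp
    have h2 : t ^ (2 * H₂) = c ^ 2 * 1 := by
      rw [mul_one, hcdef, ← Real.rpow_natCast (t ^ H₂) 2, ← Real.rpow_mul ht.le]
      norm_num
      ring_nf
    have h3 : gauss x (b ^ 2 * u ^ (2 * H₁)) = b⁻¹ * gauss (x * b⁻¹) (u ^ (2 * H₁)) := by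
      have := gauss_scale hb (v := u ^ (2 * H₁)) (Real.rpow_pos_of_pos hu0 _).ne' (x * b⁻¹)
      rw [show b * (x * b⁻¹) = x by field_simp] at this
      exact this
    have h4 : gauss (c * u) (c ^ 2 * 1) = c⁻¹ * gauss u 1 :=
      gauss_scale hc one_ne_zero u
    rw [h1, h2, h3, h4]
    unfold IF0
    ring
  have hint : (∫ u in Ioi (0:ℝ),
      gauss x ((c * u) ^ (2 * H₁)) * gauss (c * u) (t ^ (2 * H₂)))
        = (b⁻¹ * c⁻¹) * ∫ u in Ioi (0:ℝ), IF0 H₁ (x * b⁻¹) u := by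
    rw [setIntegral_congr_fun measurableSet_Ioi hpt, MeasureTheory.integral_const_mul]
  rw [hbinv, densIF_one]
  unfold densIF
  have : (∫ s in Ioi (0:ℝ), gauss x (s ^ (2 * H₁)) * gauss s (t ^ (2 * H₂)))
      = c • ∫ u in Ioi (0:ℝ),
          gauss x ((c * u) ^ (2 * H₁)) * gauss (c * u) (t ^ (2 * H₂)) := by
    rw [hchange, smul_eq_mul, smul_eq_mul]
    field_simp
  rw [this, smul_eq_mul, hint]
  field_simp

lemma hasDerivAt_phi {H₁ : ℝ} (hH₁ : H₁ ∈ Ioo (0:ℝ) 1) {z : ℝ} (hz : z ≠ 0) (H₂ : ℝ) :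
    HasDerivAt (fun y => densIF H₁ H₂ y 1) (phiA H₁ z) z := by
  simp only [densIF_one]
  exact (hasDerivAt_int_IF0 hH₁ hz).const_mul 2

lemma hasDerivAt_phiA {H₁ : ℝ} (hH₁ : H₁ ∈ Ioo (0:ℝ) 1) {z : ℝ} (hz : z ≠ 0) :
    HasDerivAt (phiA H₁) (phiB H₁ z) z := by
  unfold phiA phiB
  exact (hasDerivAt_int_IF1 hH₁ hz).const_mul 2

/-- For `H₁, H₂ ∈ (0,1)`, `x ≠ 0` and `t > 0`, the density of the iterated
fractional Brownian motion satisfies the wave-type equation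
`(1 + H₁H₂) t ∂p/∂t + t² ∂²p/∂t² = H₁²H₂² (2x ∂p/∂x + x² ∂²p/∂x²)`. -/
theorem densIF_second_order_pde (H₁ H₂ : ℝ) (hH₁ : H₁ ∈ Set.Ioo (0 : ℝ) 1)
    (hH₂ : H₂ ∈ Set.Ioo (0 : ℝ) 1) (x t : ℝ) (hx : x ≠ 0) (ht : 0 < t) :
    (1 + H₁ * H₂) * t * deriv (fun τ => densIF H₁ H₂ x τ) t
        + t ^ 2 * deriv (deriv (fun τ => densIF H₁ H₂ x τ)) t
      = H₁ ^ 2 * H₂ ^ 2 *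
          (2 * x * deriv (fun y => densIF H₁ H₂ y t) x
            + x ^ 2 * deriv (deriv (fun y => densIF H₁ H₂ y t)) x) := by
  obtain ⟨h10, h11⟩ := hH₁
  obtain ⟨h20, h21⟩ := hH₂
  set H : ℝ := H₁ * H₂ with hHdef
  have hH0 : 0 < H := mul_pos h10 h20
  set P : ℝ → ℝ := fun z => densIF H₁ H₂ z 1 with hPdef
  set A : ℝ → ℝ := phiA H₁ with hAdef
  set B : ℝ → ℝ := phiB H₁ with hBdef
  have hP : ∀ z : ℝ, z ≠ 0 → HasDerivAt P (A z) z :=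
    fun z hz => hasDerivAt_phi ⟨h10, h11⟩ hz H₂
  have hA : ∀ z : ℝ, z ≠ 0 → HasDerivAt A (B z) z :=
    fun z hz => hasDerivAt_phiA ⟨h10, h11⟩ hz
  have hscale : ∀ y : ℝ, ∀ τ : ℝ, 0 < τ →
      densIF H₁ H₂ y τ = τ ^ (-H) * P (y * τ ^ (-H)) := by
    intro y τ hτ
    rw [hHdef]
    exact densIF_scale y hτ
  have hrpow : ∀ τ : ℝ, 0 < τ → ∀ p : ℝ,
      HasDerivAt (fun τ : ℝ => τ ^ p) (p * τ ^ (p - 1)) τ :=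
    fun τ hτ p => Real.hasDerivAt_rpow_const (Or.inl hτ.ne')
  have hzne : ∀ τ : ℝ, 0 < τ → x * τ ^ (-H) ≠ 0 :=
    fun τ hτ => mul_ne_zero hx (Real.rpow_pos_of_pos hτ _).ne'
  set z₀ : ℝ := x * t ^ (-H) with hz0def
  have hz₀ : z₀ ≠ 0 := hzne t ht
  -- t-direction
  set F : ℝ → ℝ := fun τ => τ ^ (-H) * P (x * τ ^ (-H)) with hFdef
  set F₁ : ℝ → ℝ := fun τ => -H * τ ^ (-H - 1) * P (x * τ ^ (-H))
      + τ ^ (-H) * (A (x * τ ^ (-H)) * (x * (-H * τ ^ (-H - 1)))) with hF1def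
  have hFd : ∀ τ : ℝ, 0 < τ → HasDerivAt F (F₁ τ) τ := by
    intro τ hτ
    have h1 := hrpow τ hτ (-H)
    have h2 : HasDerivAt (fun τ : ℝ => x * τ ^ (-H)) (x * (-H * τ ^ (-H - 1))) τ :=
      h1.const_mul x
    have h3 : HasDerivAt (fun τ : ℝ => P (x * τ ^ (-H)))
        (A (x * τ ^ (-H)) * (x * (-H * τ ^ (-H - 1)))) τ :=
      (hP _ (hzne τ hτ)).comp (h₂ := P) τ h2
    exact h1.mul h3
  have hfeq : (fun τ => densIF H₁ H₂ x τ) =ᶠ[nhds t] F := by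
    filter_upwards [Ioi_mem_nhds ht] with τ hτ
    exact hscale x τ hτ
  have hd1 : deriv (fun τ => densIF H₁ H₂ x τ) t = F₁ t := by
    rw [hfeq.deriv_eq]
    exact (hFd t ht).deriv
  have hFd' : deriv F =ᶠ[nhds t] F₁ := by
    filter_upwards [Ioi_mem_nhds ht] with τ hτ
    exact (hFd τ hτ).deriv
  -- second derivative in t
  have hin : HasDerivAt (fun τ : ℝ => x * τ ^ (-H)) (x * (-H * t ^ (-H - 1))) t :=
    (hrpow t ht (-H)).const_mul x
  have hcompP : HasDerivAt (fun τ : ℝ => P (x * τ ^ (-H)))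
      (A z₀ * (x * (-H * t ^ (-H - 1)))) t := (hP z₀ hz₀).comp (h₂ := P) t hin
  have hcompA : HasDerivAt (fun τ : ℝ => A (x * τ ^ (-H)))
      (B z₀ * (x * (-H * t ^ (-H - 1)))) t := (hA z₀ hz₀).comp (h₂ := A) t hin
  have hr1 : HasDerivAt (fun τ : ℝ => τ ^ (-H - 1)) ((-H - 1) * t ^ (-H - 1 - 1)) t :=
    hrpow t ht (-H - 1)
  have hT1 := (hr1.const_mul (-H)).mul hcompP
  have hT2part : HasDerivAt (fun τ : ℝ => x * (-H * τ ^ (-H - 1)))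
      (x * (-H * ((-H - 1) * t ^ (-H - 1 - 1)))) t := (hr1.const_mul (-H)).const_mul x
  have hT2 := (hrpow t ht (-H)).mul (hcompA.mul hT2part)
  have hF1d : HasDerivAt F₁
      ((-H * ((-H - 1) * t ^ (-H - 1 - 1)) * P z₀ + -H * t ^ (-H - 1) * (A z₀ * (x * (-H * t ^ (-H - 1)))))
        + (-H * t ^ (-H - 1) * (A z₀ * (x * (-H * t ^ (-H - 1))))
          + t ^ (-H) * (B z₀ * (x * (-H * t ^ (-H - 1))) * (x * (-H * t ^ (-H - 1)))
            + A z₀ * (x * (-H * ((-H - 1) * t ^ (-H - 1 - 1))))))) t := by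
    exact hT1.add hT2
  have hd2 : deriv (deriv (fun τ => densIF H₁ H₂ x τ)) t
      = (-H * ((-H - 1) * t ^ (-H - 1 - 1)) * P z₀ + -H * t ^ (-H - 1) * (A z₀ * (x * (-H * t ^ (-H - 1)))))
        + (-H * t ^ (-H - 1) * (A z₀ * (x * (-H * t ^ (-H - 1))))
          + t ^ (-H) * (B z₀ * (x * (-H * t ^ (-H - 1))) * (x * (-H * t ^ (-H - 1)))
            + A z₀ * (x * (-H * ((-H - 1) * t ^ (-H - 1 - 1)))))) := by
    rw [(hfeq.deriv).deriv_eq, hFd'.deriv_eq]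
    exact hF1d.deriv
  -- x-direction
  have hgx : (fun y => densIF H₁ H₂ y t) = fun y => t ^ (-H) * P (y * t ^ (-H)) :=
    funext fun y => hscale y t ht
  have hmc : ∀ y : ℝ, HasDerivAt (fun y : ℝ => y * t ^ (-H)) (t ^ (-H)) y :=
    fun y => hasDerivAt_mul_const _
  have hGd : ∀ y : ℝ, y ≠ 0 → HasDerivAt (fun y => t ^ (-H) * P (y * t ^ (-H)))
      (t ^ (-H) * (A (y * t ^ (-H)) * t ^ (-H))) y := by
    intro y hy
    have hz : y * t ^ (-H) ≠ 0 := mul_ne_zero hy (Real.rpow_pos_of_pos ht _).ne'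
    exact ((hP _ hz).comp y (hmc y)).const_mul _
  have hdx1 : deriv (fun y => densIF H₁ H₂ y t) x = t ^ (-H) * (A z₀ * t ^ (-H)) := by
    rw [hgx]
    exact (hGd x hx).deriv
  have hdx2 : deriv (deriv (fun y => densIF H₁ H₂ y t)) x
      = t ^ (-H) * ((B z₀ * t ^ (-H)) * t ^ (-H)) := by
    rw [hgx]
    have heq2 : deriv (fun y => t ^ (-H) * P (y * t ^ (-H)))
        =ᶠ[nhds x] fun y => t ^ (-H) * (A (y * t ^ (-H)) * t ^ (-H)) := by
      filter_upwards [isOpen_compl_singleton.mem_nhds hx] with y hy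
      exact (hGd y hy).deriv
    rw [heq2.deriv_eq]
    exact ((((hA z₀ hz₀).comp x (hmc x)).mul_const _).const_mul _).deriv
  -- final algebra
  rw [hd1, hd2, hdx1, hdx2, hF1def]
  simp only
  have hsq : H₁ ^ 2 * H₂ ^ 2 = H ^ 2 := by rw [hHdef]; ring
  rw [hsq]
  have e1 : t ^ (-H - 1) = t ^ (-H) / t := by
    rw [Real.rpow_sub ht, Real.rpow_one]
  have e2 : t ^ (-H - 1 - 1) = t ^ (-H) / t / t := by
    rw [Real.rpow_sub ht, Real.rpow_sub ht, Real.rpow_one]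
  rw [e1, e2, hz0def]
  field_simp
  ring
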